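/- arXiv:gr-qc/0106052 — 6 statements merged into one kernel-verified Lean document; each statement's English description precedes it below -/
import Mathlib

section
/- Let A be a self-dual complex two-form on Minkowski space with invariant a (a² = (1/4)·tr(A·A)). Then the matrix hyperbolic cosine and sine of A satisfy (exp(A) + exp(−A))/2 = cosh(a)·I and (exp(A) − exp(−A))/2 = SH(a)·A. -/
open Matrix

noncomputable section

/-- The Minkowski metric matrix `diag(1,-1,-1,-1)`. -/
def minkEta : Matrix (Fin 4) (Fin 4) ℂ := Matrix.diagonal ![1, -1, -1, -1]

/-- The Levi-Civita symbol `ε(i,j,k,l)`: the sign of `(i,j,k,l)` as a permutation of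
`(0,1,2,3)`, and `0` if the indices are not all distinct; `ε(0,1,2,3) = 1`. -/
def eps (i j k l : Fin 4) : ℂ :=
  Matrix.det (Matrix.of ![Pi.single i 1, Pi.single j 1, Pi.single k 1, Pi.single l 1])

/-- A (complex) two-form on Minkowski space: `Fᵀ·η + η·F = 0`. -/
def IsTwoForm (F : Matrix (Fin 4) (Fin 4) ℂ) : Prop :=
  Fᵀ * minkEta + minkEta * F = 0

/-- The Hodge dual of a two-form:
`(*F)^μ_ν = (1/2)·Σ η_{μρ}·ε(ρ,ν,σ,τ)·F^σ_λ·η_{λτ}`. -/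
def dual (F : Matrix (Fin 4) (Fin 4) ℂ) : Matrix (Fin 4) (Fin 4) ℂ :=
  Matrix.of fun μ ν => (1/2 : ℂ) *
    ∑ ρ : Fin 4, ∑ σ : Fin 4, ∑ lam : Fin 4, ∑ τ : Fin 4,
      minkEta μ ρ * eps ρ ν σ τ * F σ lam * minkEta lam τ

/-- A self-dual complex two-form: a two-form with `*A = i·A`. -/
def SelfDual (A : Matrix (Fin 4) (Fin 4) ℂ) : Prop :=
  IsTwoForm A ∧ dual A = Complex.I • A

/-- An anti-self-dual complex two-form: a two-form with `*A = -i·A`. -/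
def AntiSelfDual (A : Matrix (Fin 4) (Fin 4) ℂ) : Prop :=
  IsTwoForm A ∧ dual A = (-Complex.I) • A

/-- A matrix with real entries. -/
def RealEntries (F : Matrix (Fin 4) (Fin 4) ℂ) : Prop :=
  ∀ i j, (F i j).im = 0

/-- `SH z = sinh z / z` for `z ≠ 0` and `SH 0 = 1`. -/
def SH (z : ℂ) : ℂ := if z = 0 then 1 else Complex.sinh z / z

/-! A self-dual two-form is determined by its electric part `e`: it is `twoForm e (i • e)`, whose
square is `(e ⬝ᵥ e) • 1`. Hence `A * A = a ^ 2 • 1`, and splitting the exponential series of `±A`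
into even and odd powers gives `exp (±A) = cosh a • 1 ± SH a • A`. -/

open scoped Nat

theorem hasSum_SH (z : ℂ) : HasSum (fun n : ℕ ↦ (z ^ 2) ^ n / (2 * n + 1)!) (SH z) := by
  obtain rfl | hz := eq_or_ne z 0
  · convert hasSum_ite_eq 0 (1 : ℂ) using 1
    · ext n
      rcases n with _ | n <;> simp
    · simp [SH]
  · rw [SH, if_neg hz]
    refine ((Complex.hasSum_sinh z).div_const z).congr_fun fun n ↦ ?_
    rw [pow_succ z (2 * n), pow_mul]
    field_simp

section ExpOfSquareScalar

variable {𝔸 : Type*} [Ring 𝔸] [Algebra ℂ 𝔸] [TopologicalSpace 𝔸] [IsTopologicalRing 𝔸]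
  [T2Space 𝔸] [ContinuousSMul ℂ 𝔸]

theorem exp_eq_cosh_smul_one_add_SH_smul {x : 𝔸} {a : ℂ} (hx : x * x = a ^ 2 • 1) :
    NormedSpace.exp x = Complex.cosh a • 1 + SH a • x := by
  have hpow_even (n : ℕ) : x ^ (2 * n) = (a ^ 2) ^ n • 1 := by
    rw [pow_mul, sq, hx, smul_pow, one_pow]
  have hpow_odd (n : ℕ) : x ^ (2 * n + 1) = (a ^ 2) ^ n • x := by
    rw [pow_succ, hpow_even, smul_one_mul]
  rw [NormedSpace.exp_eq_tsum ℂ]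
  refine HasSum.tsum_eq (HasSum.even_add_odd ?_ ?_)
  · convert (Complex.hasSum_cosh a).smul_const (1 : 𝔸) using 2 with n
    rw [hpow_even, smul_smul, pow_mul, div_eq_inv_mul]
  · convert (hasSum_SH a).smul_const x using 2 with n
    rw [hpow_odd, smul_smul, div_eq_inv_mul]

end ExpOfSquareScalar

/-- The two-form with electric part `e` and magnetic part `b`: `F^0_i = F^i_0 = e_i` and
`F^i_j = -ε_{ijk} b_k` for spatial indices. -/
def twoForm (e b : Fin 3 → ℂ) : Matrix (Fin 4) (Fin 4) ℂ :=
  !![0, e 0, e 1, e 2; e 0, 0, -b 2, b 1; e 1, b 2, 0, -b 0; e 2, -b 1, b 0, 0]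

theorem twoForm_inj {e b e' b' : Fin 3 → ℂ} :
    twoForm e b = twoForm e' b' ↔ e = e' ∧ b = b' := by
  refine ⟨fun h ↦ ⟨?_, ?_⟩, fun h ↦ by rw [h.1, h.2]⟩ <;> ext k <;> fin_cases k
  · exact congr_fun₂ h 0 1
  · exact congr_fun₂ h 0 2
  · exact congr_fun₂ h 0 3
  · exact congr_fun₂ h 3 2
  · exact congr_fun₂ h 1 3
  · exact congr_fun₂ h 2 1

theorem smul_twoForm (c : ℂ) (e b : Fin 3 → ℂ) :
    c • twoForm e b = twoForm (c • e) (c • b) := by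
  ext i j
  fin_cases i <;> fin_cases j <;> simp [twoForm]

theorem IsTwoForm.eq_twoForm {F : Matrix (Fin 4) (Fin 4) ℂ} (hF : IsTwoForm F) :
    F = twoForm ![F 0 1, F 0 2, F 0 3] ![F 3 2, F 1 3, F 2 1] := by
  ext i j
  have h := congr_fun₂ hF i j
  simp only [minkEta, Matrix.add_apply, mul_apply, transpose_apply, diagonal_apply, mul_ite,
    mul_zero, Finset.sum_ite_eq', Finset.mem_univ, ↓reduceIte, ite_mul, zero_mul,
    Finset.sum_ite_eq, Matrix.zero_apply] at h
  fin_cases i <;> fin_cases j <;> simp [twoForm] at h ⊢ <;> grind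

theorem dual_apply (F : Matrix (Fin 4) (Fin 4) ℂ) (μ ν : Fin 4) :
    dual F μ ν = (1/2) * minkEta μ μ * ∑ σ, ∑ τ, eps μ ν σ τ * F σ τ * minkEta τ τ := by
  simp only [dual, of_apply, minkEta, diagonal_apply, Finset.mul_sum]
  simp [mul_assoc, mul_left_comm]

theorem dual_twoForm (e b : Fin 3 → ℂ) : dual (twoForm e b) = twoForm b (-e) := by
  ext μ ν
  fin_cases μ <;> fin_cases ν <;>
    simp [dual_apply, eps, twoForm, minkEta, det_succ_row_zero, Fin.sum_univ_succ,
      Fin.succAbove, Pi.single_apply] <;> ring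

theorem SelfDual.exists_eq_twoForm {A : Matrix (Fin 4) (Fin 4) ℂ} (hA : SelfDual A) :
    ∃ e, A = twoForm e (Complex.I • e) := by
  obtain ⟨hform, hdual⟩ := hA
  have hA : A = twoForm ![A 0 1, A 0 2, A 0 3] ![A 3 2, A 1 3, A 2 1] := hform.eq_twoForm
  rw [hA, dual_twoForm, smul_twoForm, twoForm_inj] at hdual
  exact ⟨_, hdual.1 ▸ hA⟩

theorem twoForm_I_smul_mul_self (e : Fin 3 → ℂ) :
    twoForm e (Complex.I • e) * twoForm e (Complex.I • e) = (e ⬝ᵥ e) • 1 := by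
  ext i j
  fin_cases i <;> fin_cases j <;>
    simp [twoForm, mul_apply, Fin.sum_univ_four, dotProduct, Fin.sum_univ_three] <;>
    ring_nf <;> simp [Complex.I_sq]

theorem SelfDual.mul_self_eq_trace_smul_one {A : Matrix (Fin 4) (Fin 4) ℂ} (hA : SelfDual A) :
    A * A = ((1/4) * trace (A * A)) • 1 := by
  obtain ⟨e, rfl⟩ := hA.exists_eq_twoForm
  rw [twoForm_I_smul_mul_self, trace_smul, trace_one, Fintype.card_fin, smul_eq_mul]
  ring_nf

end

/-- Hyperbolic cosine and sine of a self-dual two-form `A` with invariant `a`: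
`cosh A = cosh(a)·I` and `sinh A = SH(a)·A`. -/
theorem selfDual_cosh_sinh (A : Matrix (Fin 4) (Fin 4) ℂ) (hA : SelfDual A)
    (a : ℂ) (ha : a ^ 2 = (1/4 : ℂ) * Matrix.trace (A * A)) :
    (1/2 : ℂ) • (NormedSpace.exp A + NormedSpace.exp (-A))
        = Complex.cosh a • (1 : Matrix (Fin 4) (Fin 4) ℂ) ∧
      (1/2 : ℂ) • (NormedSpace.exp A - NormedSpace.exp (-A)) = SH a • A := by
  have hsq : A * A = a ^ 2 • 1 := ha ▸ hA.mul_self_eq_trace_smul_one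
  have hsq_neg : -A * -A = a ^ 2 • 1 := by rw [neg_mul_neg, hsq]
  rw [exp_eq_cosh_smul_one_add_SH_smul hsq, exp_eq_cosh_smul_one_add_SH_smul hsq_neg]
  constructor <;> module
end

section
/- If A is a self-dual complex two-form and B is an anti-self-dual complex two-form on Minkowski space, then A and B commute: A·B = B·A. -/
open Matrix

noncomputable section

/-
A two-form `F` is `K(a) + R(b)`, where `K(a)` is the boost generated by the first row `a` of `F`
and `R(b) v = b × v` a rotation. The first row of `*F` is read off from the rotation part, so
`*F = s • F` forces `b = s • a`. The brackets `[K a, K b] = -R(a × b)`, `[R a, R b] = R(a × b)` and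
`[R a, K b] = [K a, R b] = K(a × b)` then give
`[K a + s R a, K b + t R b] = (s + t) K(a × b) + (s t - 1) R(a × b)`,
which vanishes for `t = -s` and `s² = -1`.
-/

attribute [local instance] LieRing.ofAssociativeRing

def boostGenerator (a : Fin 3 → ℂ) : Matrix (Fin 4) (Fin 4) ℂ :=
  !![0, a 0, a 1, a 2;
     a 0, 0, 0, 0;
     a 1, 0, 0, 0;
     a 2, 0, 0, 0]

def rotationGenerator (a : Fin 3 → ℂ) : Matrix (Fin 4) (Fin 4) ℂ :=
  !![0, 0, 0, 0;
     0, 0, -a 2, a 1;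
     0, a 2, 0, -a 0;
     0, -a 1, a 0, 0]

lemma lie_boostGenerator_boostGenerator (a b : Fin 3 → ℂ) :
    ⁅boostGenerator a, boostGenerator b⁆ = -rotationGenerator (a ⨯₃ b) := by
  ext i j
  fin_cases i <;> fin_cases j <;>
    simp [Ring.lie_def, boostGenerator, rotationGenerator, cross_apply] <;> ring

lemma lie_rotationGenerator_rotationGenerator (a b : Fin 3 → ℂ) :
    ⁅rotationGenerator a, rotationGenerator b⁆ = rotationGenerator (a ⨯₃ b) := by
  ext i j
  fin_cases i <;> fin_cases j <;>
    simp [Ring.lie_def, rotationGenerator, cross_apply] <;> ring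

lemma lie_rotationGenerator_boostGenerator (a b : Fin 3 → ℂ) :
    ⁅rotationGenerator a, boostGenerator b⁆ = boostGenerator (a ⨯₃ b) := by
  ext i j
  fin_cases i <;> fin_cases j <;>
    simp [Ring.lie_def, boostGenerator, rotationGenerator, cross_apply] <;> ring

lemma lie_boostGenerator_rotationGenerator (a b : Fin 3 → ℂ) :
    ⁅boostGenerator a, rotationGenerator b⁆ = boostGenerator (a ⨯₃ b) := by
  ext i j
  fin_cases i <;> fin_cases j <;>
    simp [Ring.lie_def, boostGenerator, rotationGenerator, cross_apply] <;> ring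

theorem commute_boostGenerator_add_smul_rotationGenerator {s : ℂ} (hs : s ^ 2 = -1)
    (a b : Fin 3 → ℂ) :
    Commute (boostGenerator a + s • rotationGenerator a)
      (boostGenerator b + (-s) • rotationGenerator b) := by
  rw [commute_iff_lie_eq]
  simp only [add_lie, lie_add, lie_smul, smul_lie, lie_boostGenerator_boostGenerator,
    lie_rotationGenerator_rotationGenerator, lie_rotationGenerator_boostGenerator,
    lie_boostGenerator_rotationGenerator]
  linear_combination (norm := module) -(hs • rotationGenerator (a ⨯₃ b))

lemma dual_apply_zero_one (F : Matrix (Fin 4) (Fin 4) ℂ) :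
    dual F 0 1 = (F 3 2 - F 2 3) / 2 := by
  simp [dual, eps, minkEta, det_succ_row_zero, Fin.sum_univ_succ, Pi.single_apply, Fin.succAbove]
  ring

lemma dual_apply_zero_two (F : Matrix (Fin 4) (Fin 4) ℂ) :
    dual F 0 2 = (F 1 3 - F 3 1) / 2 := by
  simp [dual, eps, minkEta, det_succ_row_zero, Fin.sum_univ_succ, Pi.single_apply, Fin.succAbove]
  ring

lemma dual_apply_zero_three (F : Matrix (Fin 4) (Fin 4) ℂ) :
    dual F 0 3 = (F 2 1 - F 1 2) / 2 := by
  simp [dual, eps, minkEta, det_succ_row_zero, Fin.sum_univ_succ, Pi.single_apply, Fin.succAbove]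
  ring

lemma IsTwoForm.apply_add_apply {F : Matrix (Fin 4) (Fin 4) ℂ} (hF : IsTwoForm F) (i j : Fin 4) :
    minkEta i i * F i j + minkEta j j * F j i = 0 := by
  simpa [mul_apply, diagonal_apply, minkEta, add_comm, mul_comm] using congr_fun₂ hF i j

theorem IsTwoForm.eq_boostGenerator_add_smul_rotationGenerator {F : Matrix (Fin 4) (Fin 4) ℂ}
    (hF : IsTwoForm F) {s : ℂ} (hs : dual F = s • F) :
    F = boostGenerator (Fin.tail (F 0)) + s • rotationGenerator (Fin.tail (F 0)) := by
  have h₁ := dual_apply_zero_one F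
  have h₂ := dual_apply_zero_two F
  have h₃ := dual_apply_zero_three F
  simp only [hs, Matrix.smul_apply, smul_eq_mul] at h₁ h₂ h₃
  have hη := hF.apply_add_apply
  simp only [minkEta, diagonal_apply_eq, Fin.forall_fin_succ, Fin.isValue, cons_val_zero, one_mul,
    cons_val_succ, Fin.succ_zero_eq_one, neg_mul, Fin.succ_one_eq_two, cons_val_fin_one,
    Fin.reduceSucc, IsEmpty.forall_iff, and_true, add_self_eq_zero, neg_eq_zero] at hη
  ext i j
  fin_cases i <;> fin_cases j <;> simp [boostGenerator, rotationGenerator, Fin.tail] <;> grind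

/-- A self-dual and an anti-self-dual two-form commute. -/
theorem selfDual_mul_antiSelfDual_comm (A B : Matrix (Fin 4) (Fin 4) ℂ)
    (hA : SelfDual A) (hB : AntiSelfDual B) :
    A * B = B * A := by
  obtain ⟨hA, hA_dual⟩ := hA
  obtain ⟨hB, hB_dual⟩ := hB
  rw [hA.eq_boostGenerator_add_smul_rotationGenerator hA_dual,
    hB.eq_boostGenerator_add_smul_rotationGenerator hB_dual]
  exact (commute_boostGenerator_add_smul_rotationGenerator Complex.I_sq _ _).eq
end
end

section
/- Let A and B be self-dual complex two-forms on Minkowski space with invariants a, b (a² = (1/4)·tr(A·A), b² = (1/4)·tr(B·B)) and mixed invariant k = (1/4)·tr(A·B). Then the invariant of their commutator satisfies ([A,B],[A,B]) = 8·(a²·b² − k²); explicitly, −(1/2)·tr([A,B]·[A,B]) = 8·(a²·b² − k²). -/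
open Matrix

noncomputable section

set_option maxHeartbeats 4000000 in
/-- A self-dual two-form is determined by its entries `A 0 1`, `A 0 2`, `A 0 3`. -/
lemma selfDual_repr (A : Matrix (Fin 4) (Fin 4) ℂ) (h : SelfDual A) :
    A = !![0, A 0 1, A 0 2, A 0 3;
           A 0 1, 0, -(Complex.I * A 0 3), Complex.I * A 0 2;
           A 0 2, Complex.I * A 0 3, 0, -(Complex.I * A 0 1);
           A 0 3, -(Complex.I * A 0 2), Complex.I * A 0 1, 0] := by
  obtain ⟨h1, h2⟩ := h
  have e00 := congrFun (congrFun h1 0) 0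
  have e11 := congrFun (congrFun h1 1) 1
  have e22 := congrFun (congrFun h1 2) 2
  have e33 := congrFun (congrFun h1 3) 3
  have e01 := congrFun (congrFun h1 0) 1
  have e02 := congrFun (congrFun h1 0) 2
  have e03 := congrFun (congrFun h1 0) 3
  have e12 := congrFun (congrFun h1 1) 2
  have e13 := congrFun (congrFun h1 1) 3
  have e23 := congrFun (congrFun h1 2) 3
  simp (config := { decide := true }) [Matrix.mul_apply, minkEta, Matrix.diagonal,
    Fin.sum_univ_four] at e00 e11 e22 e33 e01 e02 e03 e12 e13 e23
  have d12 := congrFun (congrFun h2 1) 2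
  have d13 := congrFun (congrFun h2 1) 3
  have d23 := congrFun (congrFun h2 2) 3
  simp (config := { decide := true }) [dual, eps, minkEta, Matrix.diagonal, Fin.sum_univ_four,
    Fin.sum_univ_succ, Matrix.det_succ_row_zero, Pi.single_apply, Matrix.vecHead, Matrix.vecTail,
    Function.comp, show Fin.succ 0 = (1 : Fin 4) from rfl, show Fin.succ 1 = (2 : Fin 4) from rfl,
    show Fin.succ 2 = (3 : Fin 4) from rfl] at d12 d13 d23
  have h00 : A 0 0 = 0 := e00
  have h11 : A 1 1 = 0 := e11
  have h22 : A 2 2 = 0 := e22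
  have h33 : A 3 3 = 0 := e33
  have h10 : A 1 0 = A 0 1 := by linear_combination -e01
  have h20 : A 2 0 = A 0 2 := by linear_combination -e02
  have h30 : A 3 0 = A 0 3 := by linear_combination -e03
  have h12 : A 1 2 = -(Complex.I * A 0 3) := by
    linear_combination Complex.I * d12 + A 1 2 * Complex.I_sq + (Complex.I/2) * e03
  have h13 : A 1 3 = Complex.I * A 0 2 := by
    linear_combination Complex.I * d13 + A 1 3 * Complex.I_sq + (-Complex.I/2) * e02
  have h23 : A 2 3 = -(Complex.I * A 0 1) := by
    linear_combination Complex.I * d23 + A 2 3 * Complex.I_sq + (Complex.I/2) * e01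
  have h21 : A 2 1 = Complex.I * A 0 3 := by
    linear_combination -e12 - h12
  have h31 : A 3 1 = -(Complex.I * A 0 2) := by
    linear_combination -e13 - h13
  have h32 : A 3 2 = Complex.I * A 0 1 := by
    linear_combination -e23 - h23
  ext i j
  fin_cases i <;> fin_cases j
  exacts [h00, rfl, rfl, rfl, h10, h11, h12, h13, h20, h21, h22, h23, h30, h31, h32, h33]

set_option maxHeartbeats 4000000 in
/-- Invariant of the commutator of two self-dual two-forms:
`([A,B],[A,B]) = 8·(a²·b² − k²)`. -/
theorem selfDual_commutator_invariant (A B : Matrix (Fin 4) (Fin 4) ℂ)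
    (hA : SelfDual A) (hB : SelfDual B) (a b k : ℂ)
    (ha : a ^ 2 = (1/4 : ℂ) * Matrix.trace (A * A))
    (hb : b ^ 2 = (1/4 : ℂ) * Matrix.trace (B * B))
    (hk : k = (1/4 : ℂ) * Matrix.trace (A * B)) :
    -(1/2 : ℂ) * Matrix.trace ((A * B - B * A) * (A * B - B * A))
      = 8 * (a ^ 2 * b ^ 2 - k ^ 2) := by
  rw [ha, hb, hk, selfDual_repr A hA, selfDual_repr B hB]
  simp only [Matrix.trace, Matrix.diag, Matrix.mul_apply, Matrix.sub_apply, Fin.sum_univ_four]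
  simp only [Matrix.cons_val', Matrix.cons_val_zero, Matrix.cons_val_one, Matrix.head_cons,
    Matrix.empty_val', Matrix.cons_val_fin_one, Matrix.head_fin_const, Matrix.cons_val_two,
    Matrix.tail_cons, Matrix.cons_val_three, Matrix.head_fin_const, Matrix.of_apply]
  have hI := Complex.I_sq
  linear_combination ((-1 - Complex.I ^ 2) * ((B 0 1 * A 0 2 - B 0 2 * A 0 1) ^ 2 + (B 0 1 * A 0 3 - B 0 3 * A 0 1) ^ 2 + (B 0 2 * A 0 3 - B 0 3 * A 0 2) ^ 2)) * hI
end
end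

section
/- Let A and B be self-dual complex two-forms on Minkowski space with invariants a, b and mixed invariant k, and set Z := SH(a)·cosh(b)·A + cosh(a)·SH(b)·B + (1/2)·SH(a)·SH(b)·[A,B]. Then (1/4)·tr(Z·Z) = (cosh(a)·cosh(b) + k·SH(a)·SH(b))² − 1. -/
open Matrix

noncomputable section

lemma fs0' : (Fin.succ 0 : Fin 4) = 1 := rfl
lemma fs1' : (Fin.succ 1 : Fin 4) = 2 := rfl
lemma fs2' : (Fin.succ 2 : Fin 4) = 3 := rfl

/-- Parametrization of self-dual two-forms. -/
def sdM (p q r : ℂ) : Matrix (Fin 4) (Fin 4) ℂ :=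
  !![0, -Complex.I*r, Complex.I*q, p;
     -Complex.I*r, 0, -Complex.I*p, -q;
     Complex.I*q, Complex.I*p, 0, -r;
     p, q, r, 0]

lemma sdME00 (p q r : ℂ) : sdM p q r 0 0 = (0:ℂ) := rfl
lemma sdME01 (p q r : ℂ) : sdM p q r 0 1 = -Complex.I*r := rfl
lemma sdME02 (p q r : ℂ) : sdM p q r 0 2 = Complex.I*q := rfl
lemma sdME03 (p q r : ℂ) : sdM p q r 0 3 = p := rfl
lemma sdME10 (p q r : ℂ) : sdM p q r 1 0 = -Complex.I*r := rfl
lemma sdME11 (p q r : ℂ) : sdM p q r 1 1 = (0:ℂ) := rfl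
lemma sdME12 (p q r : ℂ) : sdM p q r 1 2 = -Complex.I*p := rfl
lemma sdME13 (p q r : ℂ) : sdM p q r 1 3 = -q := rfl
lemma sdME20 (p q r : ℂ) : sdM p q r 2 0 = Complex.I*q := rfl
lemma sdME21 (p q r : ℂ) : sdM p q r 2 1 = Complex.I*p := rfl
lemma sdME22 (p q r : ℂ) : sdM p q r 2 2 = (0:ℂ) := rfl
lemma sdME23 (p q r : ℂ) : sdM p q r 2 3 = -r := rfl
lemma sdME30 (p q r : ℂ) : sdM p q r 3 0 = p := rfl
lemma sdME31 (p q r : ℂ) : sdM p q r 3 1 = q := rfl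
lemma sdME32 (p q r : ℂ) : sdM p q r 3 2 = r := rfl
lemma sdME33 (p q r : ℂ) : sdM p q r 3 3 = (0:ℂ) := rfl

set_option maxHeartbeats 4000000 in
lemma selfDual_repr_s8 (A : Matrix (Fin 4) (Fin 4) ℂ) (hA : SelfDual A) :
    A = sdM (A 3 0) (A 3 1) (A 3 2) := by
  obtain ⟨h1, h2⟩ := hA
  have s := fun i j : Fin 4 => congrFun (congrFun h1 i) j
  have d := fun i j : Fin 4 => congrFun (congrFun h2 i) j
  have s00 := s 0 0; have s11 := s 1 1; have s22 := s 2 2; have s33 := s 3 3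
  have s01 := s 0 1; have s02 := s 0 2; have s03 := s 0 3
  have s12 := s 1 2; have s13 := s 1 3; have s23 := s 2 3
  simp [Matrix.mul_apply, minkEta, Fin.sum_univ_four, Matrix.diagonal_apply,
    Matrix.add_apply, Matrix.transpose_apply] at s00 s11 s22 s33 s01 s02 s03 s12 s13 s23
  have d01 := d 0 1; have d02 := d 0 2; have d03 := d 0 3
  simp [dual, eps, minkEta, Fin.sum_univ_four, Matrix.det_succ_row_zero, Fin.sum_univ_succ,
    Pi.single_apply, Matrix.diagonal_apply, fs0', fs1', fs2', Matrix.smul_apply] at d01 d02 d03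
  ext i j
  fin_cases i <;> fin_cases j <;> simp [sdM]
  · exact s00
  · linear_combination Complex.I*d01 - Complex.I/2*s23 + A 0 1 * Complex.I_sq
  · linear_combination Complex.I*d02 + Complex.I/2*s13 + A 0 2 * Complex.I_sq
  · linear_combination s03
  · linear_combination -s01 + Complex.I*d01 - Complex.I/2*s23 + A 0 1 * Complex.I_sq
  · exact s11
  · linear_combination -d03 - (1/2)*s12 - Complex.I*s03
  · linear_combination -s13
  · linear_combination -s02 + Complex.I*d02 + Complex.I/2*s13 + A 0 2 * Complex.I_sq
  · linear_combination d03 - (1/2)*s12 + Complex.I*s03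
  · exact s22
  · linear_combination -s23
  · exact s33

lemma trace_fin_four' (A : Matrix (Fin 4) (Fin 4) ℂ) :
    Matrix.trace A = A 0 0 + A 1 1 + A 2 2 + A 3 3 := by
  simp [Matrix.trace, Matrix.diag, Fin.sum_univ_four]

lemma sh_sq (z : ℂ) : SH z ^ 2 * z ^ 2 = Complex.cosh z ^ 2 - 1 := by
  rcases eq_or_ne z 0 with h | h
  · simp [SH, h]
  · have hz : SH z * z = Complex.sinh z := by
      rw [SH, if_neg h]; field_simp
    have h2 : Complex.cosh z ^ 2 - Complex.sinh z ^ 2 = 1 := Complex.cosh_sq_sub_sinh_sq z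
    linear_combination (SH z * z + Complex.sinh z) * hz - h2

set_option maxHeartbeats 4000000 in
set_option maxRecDepth 20000 in
/-- Invariant of the antisymmetric part `Z` of `exp(A)·exp(B)`:
`(1/4)·tr(Z·Z) = (cosh(a)·cosh(b) + k·SH(a)·SH(b))² − 1`. -/
theorem selfDual_Z_invariant (A B : Matrix (Fin 4) (Fin 4) ℂ)
    (hA : SelfDual A) (hB : SelfDual B) (a b k : ℂ)
    (ha : a ^ 2 = (1/4 : ℂ) * Matrix.trace (A * A))
    (hb : b ^ 2 = (1/4 : ℂ) * Matrix.trace (B * B))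
    (hk : k = (1/4 : ℂ) * Matrix.trace (A * B)) :
    (1/4 : ℂ) * Matrix.trace
        (((SH a * Complex.cosh b) • A + (Complex.cosh a * SH b) • B
            + ((1/2 : ℂ) * SH a * SH b) • (A * B - B * A))
          * ((SH a * Complex.cosh b) • A + (Complex.cosh a * SH b) • B
            + ((1/2 : ℂ) * SH a * SH b) • (A * B - B * A)))
      = (Complex.cosh a * Complex.cosh b + k * SH a * SH b) ^ 2 - 1 := by
  rw [selfDual_repr_s8 A hA] at ha hk ⊢
  rw [selfDual_repr_s8 B hB] at hb hk ⊢
  have hsa := sh_sq a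
  have hsb := sh_sq b
  simp only [trace_fin_four', Matrix.mul_apply, Fin.sum_univ_four, Matrix.add_apply,
    Matrix.sub_apply, Matrix.smul_apply, smul_eq_mul, sdME00, sdME01, sdME02, sdME03, sdME10, sdME11, sdME12, sdME13, sdME20, sdME21, sdME22, sdME23, sdME30, sdME31, sdME32, sdME33]
    at ha hb hk ⊢
  have hI2 : Complex.I ^ 2 = -1 := Complex.I_sq
  have hI3 : Complex.I ^ 3 = -Complex.I := by rw [pow_succ, hI2]; ring
  have hI4 : Complex.I ^ 4 = 1 := by rw [show (4:ℕ)=2+2 from rfl, pow_add, hI2]; ring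
  ring_nf at ha hb hk ⊢
  simp only [hI2, hI3, hI4] at ha hb hk ⊢
  linear_combination
    (-(2*(SH a)*(SH b)*(Complex.cosh a)*(Complex.cosh b)
        + (SH a)^2*(SH b)^2*((A 3 0 * B 3 0 - A 3 1 * B 3 1 - A 3 2 * B 3 2) + k))) * hk
    + (-((SH a)^2*(Complex.cosh b)^2
        - (SH a)^2*(SH b)^2*(B 3 0 ^ 2 - B 3 1 ^ 2 - B 3 2 ^ 2))) * ha
    + (-((Complex.cosh a)^2*(SH b)^2 - (SH a)^2*(SH b)^2*a^2)) * hb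
    + ((Complex.cosh b)^2 - (SH b)^2*b^2) * hsa
    + hsb
end
end

section
/- Let F and G be real two-forms on Minkowski space, regarded as complex matrices, and set A := (1/2)·(F − i·*F), B := (1/2)·(G − i·*G). If D is a self-dual complex two-form with exp(A)·exp(B) = exp(D), then exp(F)·exp(G) = exp(D + conj(D)), where conj(D) denotes the entrywise complex conjugate of D (so that D + conj(D) = 2·Re(D) is a real two-form). -/
open Matrix

noncomputable section

/-! Every real two-form splits as `F = A + conj A` with `A = ½(F - i·*F)` self-dual (because
`**F = -F`), and a self-dual form commutes with every anti-self-dual one, such as `conj A`.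
Hence `exp F = exp A · conj (exp A)`, and since `conj (exp A)` also commutes with `exp B`,
`exp F · exp G = (exp A · exp B) · conj (exp A · exp B) = exp D · conj (exp D)`, which is
`exp (D + conj D)` because `D` commutes with `conj D`. -/

open ComplexConjugate

lemma Matrix.map_conj_eq_conjTranspose_transpose {n : Type*} (X : Matrix n n ℂ) :
    X.map conj = Xᵀᴴ := rfl

lemma Matrix.exp_map_conj {n : Type*} [Fintype n] [DecidableEq n] (X : Matrix n n ℂ) :
    NormedSpace.exp (X.map conj) = (NormedSpace.exp X).map conj := by
  simp only [Matrix.map_conj_eq_conjTranspose_transpose, Matrix.exp_conjTranspose,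
    Matrix.exp_transpose]

def mkTwoForm (a b c p q r : ℂ) : Matrix (Fin 4) (Fin 4) ℂ :=
  !![0, a, b, c; a, 0, p, q; b, -p, 0, r; c, -q, -r, 0]

lemma isTwoForm_iff {F : Matrix (Fin 4) (Fin 4) ℂ} :
    IsTwoForm F ↔ ∀ i j, F j i * minkEta j j + minkEta i i * F i j = 0 := by
  simp [IsTwoForm, minkEta, ← Matrix.ext_iff, Matrix.mul_diagonal, Matrix.diagonal_mul]

lemma isTwoForm_mkTwoForm (a b c p q r : ℂ) : IsTwoForm (mkTwoForm a b c p q r) := by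
  rw [isTwoForm_iff]
  intro i j
  fin_cases i <;> fin_cases j <;> simp [mkTwoForm, minkEta]

lemma IsTwoForm.eq_mkTwoForm {F : Matrix (Fin 4) (Fin 4) ℂ} (hF : IsTwoForm F) :
    F = mkTwoForm (F 0 1) (F 0 2) (F 0 3) (F 1 2) (F 1 3) (F 2 3) := by
  rw [isTwoForm_iff] at hF
  ext i j
  have h := hF i j
  fin_cases i <;> fin_cases j <;> simp [mkTwoForm, minkEta] at h ⊢ <;> grind

lemma IsTwoForm.add {F G : Matrix (Fin 4) (Fin 4) ℂ} (hF : IsTwoForm F) (hG : IsTwoForm G) :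
    IsTwoForm (F + G) := by
  rw [IsTwoForm, Matrix.transpose_add, Matrix.add_mul, Matrix.mul_add, add_add_add_comm, hF, hG,
    add_zero]

lemma IsTwoForm.smul {F : Matrix (Fin 4) (Fin 4) ℂ} (hF : IsTwoForm F) (k : ℂ) :
    IsTwoForm (k • F) := by
  rw [IsTwoForm, Matrix.transpose_smul, Matrix.smul_mul, Matrix.mul_smul, ← smul_add, hF,
    smul_zero]

lemma dual_add (F G : Matrix (Fin 4) (Fin 4) ℂ) : dual (F + G) = dual F + dual G := by
  ext μ ν
  simp only [dual, Matrix.of_apply, Matrix.add_apply, mul_add, add_mul, Finset.sum_add_distrib]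

lemma dual_smul (k : ℂ) (F : Matrix (Fin 4) (Fin 4) ℂ) : dual (k • F) = k • dual F := by
  ext μ ν
  simp only [dual, Matrix.of_apply, Matrix.smul_apply, smul_eq_mul, Finset.mul_sum]
  congr! 4 with ρ _ σ _ lam _ τ
  ring

set_option maxHeartbeats 4000000 in
lemma dual_mkTwoForm (a b c p q r : ℂ) :
    dual (mkTwoForm a b c p q r) = mkTwoForm (-r) q (-p) c (-b) a := by
  ext i j
  fin_cases i <;> fin_cases j <;>
    (simp +decide [dual, minkEta, Matrix.diagonal_apply, eps, Matrix.det_succ_row_zero,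
      Fin.sum_univ_succ, mkTwoForm, Pi.single_apply, Fin.val_succ] <;>
      ring)

lemma IsTwoForm.isTwoForm_dual {F : Matrix (Fin 4) (Fin 4) ℂ} (hF : IsTwoForm F) :
    IsTwoForm (dual F) := by
  rw [hF.eq_mkTwoForm, dual_mkTwoForm]
  exact isTwoForm_mkTwoForm ..

lemma IsTwoForm.dual_dual {F : Matrix (Fin 4) (Fin 4) ℂ} (hF : IsTwoForm F) :
    dual (dual F) = -F := by
  conv_rhs => rw [hF.eq_mkTwoForm]
  rw [hF.eq_mkTwoForm, dual_mkTwoForm, dual_mkTwoForm]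
  ext i j
  fin_cases i <;> fin_cases j <;> simp [mkTwoForm]

lemma IsTwoForm.eq_mkTwoForm_of_dual_eq_smul {F : Matrix (Fin 4) (Fin 4) ℂ} {k : ℂ}
    (hF : IsTwoForm F) (h : dual F = k • F) :
    F = mkTwoForm (F 0 1) (F 0 2) (F 0 3) (-(k * F 0 3)) (k * F 0 2) (-(k * F 0 1)) := by
  rw [hF.eq_mkTwoForm, dual_mkTwoForm] at h
  have h01 := congrFun (congrFun h 0) 1
  have h02 := congrFun (congrFun h 0) 2
  have h03 := congrFun (congrFun h 0) 3
  simp only [mkTwoForm, of_apply, cons_val', cons_val_zero, cons_val_one, cons_val,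
    cons_val_fin_one, Matrix.smul_apply, smul_eq_mul, neg_neg] at h01 h02 h03
  rw [hF.eq_mkTwoForm]
  simp [mkTwoForm, ← h01, ← h02, ← h03]

lemma commute_mkTwoForm_selfDual_antiSelfDual (a b c x y z : ℂ) :
    Commute (mkTwoForm a b c (-(Complex.I * c)) (Complex.I * b) (-(Complex.I * a)))
      (mkTwoForm x y z (-(-Complex.I * z)) (-Complex.I * y) (-(-Complex.I * x))) := by
  ext i j
  fin_cases i <;> fin_cases j <;>
    simp [mkTwoForm, Matrix.mul_apply, Fin.sum_univ_four] <;> ring_nf <;> simp [Complex.I_sq]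

lemma SelfDual.commute {A B : Matrix (Fin 4) (Fin 4) ℂ} (hA : SelfDual A)
    (hB : AntiSelfDual B) :
    Commute A B := by
  rw [hA.1.eq_mkTwoForm_of_dual_eq_smul hA.2, hB.1.eq_mkTwoForm_of_dual_eq_smul hB.2]
  exact commute_mkTwoForm_selfDual_antiSelfDual ..

lemma realEntries_iff_map_conj_eq {F : Matrix (Fin 4) (Fin 4) ℂ} :
    RealEntries F ↔ F.map conj = F := by
  simp [RealEntries, ← Matrix.ext_iff, Complex.conj_eq_iff_im]

lemma realEntries_minkEta : RealEntries minkEta := by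
  intro i j
  by_cases h : i = j
  · subst h
    fin_cases i <;> simp [minkEta]
  · simp [minkEta, h]

lemma conj_eps (i j k l : Fin 4) : conj (eps i j k l) = eps i j k l := by
  have hsingle (i c : Fin 4) :
      conj ((Pi.single i 1 : Fin 4 → ℂ) c) = (Pi.single i 1 : Fin 4 → ℂ) c := by
    by_cases h : c = i <;> simp [h]
  rw [eps, RingHom.map_det]
  congr 1
  ext r c
  fin_cases r <;> simp [hsingle]

lemma dual_map_conj (F : Matrix (Fin 4) (Fin 4) ℂ) : dual (F.map conj) = (dual F).map conj := by
  have hη (i j : Fin 4) : conj (minkEta i j) = minkEta i j :=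
    Complex.conj_eq_iff_im.2 (realEntries_minkEta i j)
  ext μ ν
  simp [dual, map_sum, map_ofNat, hη, conj_eps]

lemma IsTwoForm.map_conj {F : Matrix (Fin 4) (Fin 4) ℂ} (hF : IsTwoForm F) :
    IsTwoForm (F.map conj) := by
  rw [IsTwoForm, ← realEntries_iff_map_conj_eq.1 realEntries_minkEta, ← Matrix.transpose_map,
    ← Matrix.map_mul, ← Matrix.map_mul, ← Matrix.map_add _ (map_add _), hF,
    Matrix.map_zero _ (map_zero _)]

lemma SelfDual.antiSelfDual_map_conj {A : Matrix (Fin 4) (Fin 4) ℂ} (hA : SelfDual A) :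
    AntiSelfDual (A.map conj) := by
  refine ⟨hA.1.map_conj, ?_⟩
  rw [dual_map_conj, hA.2]
  ext i j
  simp

def selfDualPart (F : Matrix (Fin 4) (Fin 4) ℂ) : Matrix (Fin 4) (Fin 4) ℂ :=
  (1/2 : ℂ) • (F - Complex.I • dual F)

lemma IsTwoForm.selfDual_selfDualPart {F : Matrix (Fin 4) (Fin 4) ℂ} (hF : IsTwoForm F) :
    SelfDual (selfDualPart F) := by
  constructor
  · rw [selfDualPart, sub_eq_add_neg, ← neg_smul]
    exact (hF.add (hF.isTwoForm_dual.smul _)).smul _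
  · rw [selfDualPart, sub_eq_add_neg, ← neg_smul, dual_smul, dual_add, dual_smul, hF.dual_dual]
    match_scalars
    · linear_combination (1/2 : ℂ) * Complex.I_sq
    · ring

lemma RealEntries.selfDualPart_add_map_conj {F : Matrix (Fin 4) (Fin 4) ℂ}
    (hFr : RealEntries F) :
    selfDualPart F + (selfDualPart F).map conj = F := by
  have hF' := realEntries_iff_map_conj_eq.1 hFr
  have hdF : (dual F).map conj = dual F := by rw [← dual_map_conj, hF']
  ext i j
  have h1 := congrFun (congrFun hF' i) j
  have h2 := congrFun (congrFun hdF i) j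
  simp only [Matrix.map_apply] at h1 h2
  simp only [selfDualPart, Matrix.add_apply, Matrix.smul_apply, Matrix.sub_apply, smul_eq_mul,
    map_apply, map_mul, map_div₀, map_one, map_ofNat, map_sub, h1, h2, Complex.conj_I]
  ring

lemma SelfDual.exp_add_map_conj {A : Matrix (Fin 4) (Fin 4) ℂ} (hA : SelfDual A) :
    NormedSpace.exp (A + A.map conj) = NormedSpace.exp A * (NormedSpace.exp A).map conj := by
  rw [Matrix.exp_add_of_commute _ _ (hA.commute hA.antiSelfDual_map_conj), Matrix.exp_map_conj]

/-- If `exp(A)·exp(B) = exp(D)` for the self-dual parts `A`, `B` of real two-forms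
`F`, `G`, then `exp(F)·exp(G) = exp(D + conj(D))`. -/
theorem realTwoForm_exp_mul_exp (F G D : Matrix (Fin 4) (Fin 4) ℂ)
    (hF : IsTwoForm F) (hG : IsTwoForm G)
    (hFr : RealEntries F) (hGr : RealEntries G)
    (hD : SelfDual D)
    (hAB : NormedSpace.exp ((1/2 : ℂ) • (F - Complex.I • dual F))
        * NormedSpace.exp ((1/2 : ℂ) • (G - Complex.I • dual G))
      = NormedSpace.exp D) :
    NormedSpace.exp F * NormedSpace.exp G
      = NormedSpace.exp (D + D.map (starRingEnd ℂ)) := by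
  change NormedSpace.exp (selfDualPart F) * NormedSpace.exp (selfDualPart G) = _ at hAB
  set A := selfDualPart F
  set B := selfDualPart G
  have hA : SelfDual A := hF.selfDual_selfDualPart
  have hB : SelfDual B := hG.selfDual_selfDualPart
  have hswap : Commute ((NormedSpace.exp A).map conj) (NormedSpace.exp B) := by
    rw [← Matrix.exp_map_conj]
    exact (hB.commute hA.antiSelfDual_map_conj).symm.exp
  calc NormedSpace.exp F * NormedSpace.exp G
      = NormedSpace.exp A * (NormedSpace.exp A).map conj
          * (NormedSpace.exp B * (NormedSpace.exp B).map conj) := by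
        rw [← hFr.selfDualPart_add_map_conj, ← hGr.selfDualPart_add_map_conj,
          hA.exp_add_map_conj, hB.exp_add_map_conj]
    _ = NormedSpace.exp A * NormedSpace.exp B
          * (NormedSpace.exp A * NormedSpace.exp B).map conj := by
        rw [Matrix.map_mul]
        exact hswap.mul_mul_mul_comm _ _
    _ = NormedSpace.exp (D + D.map conj) := by rw [hAB, hD.exp_add_map_conj]
end
end

section
/- (Invariants of the BCH composition.) Let x, y ∈ ℝ and set λ := cosh(x/2)·cos(y/2) and μ := sinh(x/2)·sin(y/2) (so that cosh((x − i·y)/2) = λ − i·μ). Define l := λ² + μ² and m := √((l+1)² − 4·λ²) (real square root). Then cosh(x) = l + m and cos(y) = l − m. -/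
/-- Invariants of the BCH composition: with `λ = cosh(x/2)·cos(y/2)`,
`μ = sinh(x/2)·sin(y/2)`, `l = λ² + μ²` and `m = √((l+1)² − 4λ²)`, one has
`cosh x = l + m` and `cos y = l − m`. -/
theorem bch_invariants (x y lam mu l m : ℝ)
    (hlam : lam = Real.cosh (x/2) * Real.cos (y/2))
    (hmu : mu = Real.sinh (x/2) * Real.sin (y/2))
    (hl : l = lam ^ 2 + mu ^ 2)
    (hm : m = Real.sqrt ((l + 1) ^ 2 - 4 * lam ^ 2)) :
    Real.cosh x = l + m ∧ Real.cos y = l - m := by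
  set c := Real.cosh (x/2) with hc
  set s := Real.sinh (x/2) with hs
  set C := Real.cos (y/2) with hC
  set S := Real.sin (y/2) with hS
  have h1 : c ^ 2 = s ^ 2 + 1 := Real.cosh_sq (x/2)
  have h2 : S ^ 2 + C ^ 2 = 1 := Real.sin_sq_add_cos_sq (y/2)
  have hcc : 1 ≤ c := Real.one_le_cosh (x/2)
  have hC1 : C ^ 2 ≤ 1 := by nlinarith [Real.neg_one_le_cos (y/2), Real.cos_le_one (y/2)]
  have hge : C ^ 2 ≤ c ^ 2 := by nlinarith
  have hs2 : s ^ 2 = c ^ 2 - 1 := by linarith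
  have hS2 : S ^ 2 = 1 - C ^ 2 := by linarith
  have h3 : (s * S) ^ 2 = (c ^ 2 - 1) * (1 - C ^ 2) := by
    rw [mul_pow, hs2, hS2]
  have hlval : l = c ^ 2 + C ^ 2 - 1 := by rw [hl, hlam, hmu, h3]; ring
  have hmval : m = c ^ 2 - C ^ 2 := by
    have harg : (l + 1) ^ 2 - 4 * lam ^ 2 = (c ^ 2 - C ^ 2) ^ 2 := by
      rw [hlval, hlam]; ring
    rw [hm, harg, Real.sqrt_sq (by linarith)]
  have hcx : Real.cosh x = 2 * c ^ 2 - 1 := by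
    have := Real.cosh_sq (x/2)
    rw [show x = 2 * (x/2) by ring, Real.cosh_two_mul]
    linarith
  have hcy : Real.cos y = 2 * C ^ 2 - 1 := by
    rw [show y = 2 * (y/2) by ring, Real.cos_two_mul]
  constructor <;> (rw [hmval, hlval]; linarith)
end
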